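/- arXiv:2602.23503 — 8 statements merged into one kernel-verified Lean document; each statement's English description precedes it below -/
import Mathlib

section
/- Let M be an N × N matrix over a field F with at most m nonzero entries. Then the spiky rank of M over F is at most 2√m. -/
open Matrix MeasureTheory

/-- A blocky matrix: its support is a disjoint union of combinatorial rectangles,
with value 1 on the support and 0 elsewhere. -/
def IsBlocky {F : Type*} [Field F] {m n : Type*} (M : Matrix m n F) : Prop :=
  ∃ (k : ℕ) (S : Fin k → Finset m) (T : Fin k → Finset n),
    (∀ a b, a ≠ b → Disjoint (S a) (S b)) ∧
    (∀ a b, a ≠ b → Disjoint (T a) (T b)) ∧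
    (∀ i j, (∃ l, i ∈ S l ∧ j ∈ T l) → M i j = 1) ∧
    (∀ i j, (¬ ∃ l, i ∈ S l ∧ j ∈ T l) → M i j = 0)

/-- A spiky matrix: the entrywise product of a blocky matrix and a rank-one matrix. -/
def IsSpiky {F : Type*} [Field F] {m n : Type*} (M : Matrix m n F) : Prop :=
  ∃ (B : Matrix m n F) (u : m → F) (v : n → F),
    IsBlocky B ∧ ∀ i j, M i j = B i j * (u i * v j)

/-- The spiky rank: minimum number of spiky matrices summing to `M`. -/
noncomputable def spikyRank {F : Type*} [Field F] {m n : Type*} (M : Matrix m n F) : ℕ :=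
  sInf {r | ∃ f : Fin r → Matrix m n F, (∀ i, IsSpiky (f i)) ∧ ∑ i, f i = M}

/-- The blocky rank: minimum number of blocky matrices whose linear combination equals `M`. -/
noncomputable def blockyRank {F : Type*} [Field F] {m n : Type*} (M : Matrix m n F) : ℕ :=
  sInf {r | ∃ (f : Fin r → Matrix m n F) (c : Fin r → F),
    (∀ i, IsBlocky (f i)) ∧ ∑ i, c i • f i = M}

/-- Sparsity: the number of nonzero entries of a matrix. -/
noncomputable def matSparsity {F : Type*} [Zero F] {m n : Type*} (M : Matrix m n F) : ℕ :=
  {p : m × n | M p.1 p.2 ≠ 0}.ncard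

/-- Rank-`r` rigidity: minimum number of entries that must be changed to bring the rank
down to `r`. -/
noncomputable def rigidity {F : Type*} [Field F] {N : ℕ}
    (M : Matrix (Fin N) (Fin N) F) (r : ℕ) : ℕ :=
  sInf {s | ∃ A C : Matrix (Fin N) (Fin N) F, M = A + C ∧ A.rank ≤ r ∧ matSparsity C ≤ s}

/-- Sign spiky rank: minimum spiky rank over real matrices with the same sign pattern. -/
noncomputable def signSpikyRank {m n : Type*} (M : Matrix m n ℝ) : ℕ :=
  sInf {r | ∃ A : Matrix m n ℝ,
    (∀ i j, Real.sign (A i j) = Real.sign (M i j)) ∧ spikyRank A ≤ r}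

/-- Blocky cover number: minimum number of blocky matrices whose supports' union is
exactly the set of 1-entries of the Boolean matrix `M`. -/
noncomputable def blockyCover {m n : Type*} (M : Matrix m n ℝ) : ℕ :=
  sInf {k | ∃ f : Fin k → Matrix m n ℝ, (∀ l, IsBlocky (f l)) ∧
    ∀ i j, M i j = 1 ↔ ∃ l, f l i j = 1}

/-!
Put `t = ⌊√m⌋`. A column with more than `t` nonzero entries is a spiky matrix on its own, and
there are at most `m / (t + 1) ≤ √m` such columns. In each remaining column number the nonzero
entries `0, 1, …, < t`; for each `k < t` the entries numbered `k` form a matrix with at most one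
nonzero entry per column, which is spiky. Hence `M` is a sum of at most `√m + t ≤ 2√m` spiky
matrices.
-/

open Finset

namespace Finset

lemma exists_injOn_lt_card {α : Type*} (s : Finset α) :
    ∃ r : α → ℕ, Set.InjOn r s ∧ ∀ a ∈ s, r a < #s := by
  classical
  refine ⟨fun a => if h : a ∈ s then s.equivFin ⟨a, h⟩ else 0, ?_, ?_⟩
  · intro a ha b hb hab
    simpa [dif_pos (Finset.mem_coe.mp ha), dif_pos (Finset.mem_coe.mp hb), Fin.val_inj] using hab
  · intro a ha
    simp [dif_pos ha]

end Finset

lemma cast_le_sqrt_of_mul_sqrt_succ_le {a m : ℕ} (h : a * (Nat.sqrt m + 1) ≤ m) :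
    (a : ℝ) ≤ √m := by
  have hpos : (0 : ℝ) < Nat.sqrt m + 1 := by positivity
  have h' : (a : ℝ) * (Nat.sqrt m + 1) ≤ √m * (Nat.sqrt m + 1) :=
    calc (a : ℝ) * (Nat.sqrt m + 1) ≤ m := by exact_mod_cast h
      _ = √m * √m := (Real.mul_self_sqrt m.cast_nonneg).symm
      _ ≤ √m * (Nat.sqrt m + 1) := by gcongr; exact Real.real_sqrt_le_nat_sqrt_succ
  exact le_of_mul_le_mul_right h' hpos

namespace Matrix

variable {α : Type*} {m n : Type*}

def colSupport [Fintype m] [Zero α] [DecidableEq α] (M : Matrix m n α) (j : n) : Finset m :=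
  {i | M i j ≠ 0}

@[simp]
lemma mem_colSupport [Fintype m] [Zero α] [DecidableEq α] {M : Matrix m n α} {i : m} {j : n} :
    i ∈ M.colSupport j ↔ M i j ≠ 0 := by
  simp [colSupport]

lemma matSparsity_eq_sum_card_colSupport [Fintype m] [Fintype n] [Zero α] [DecidableEq α]
    (M : Matrix m n α) : matSparsity M = ∑ j, #(M.colSupport j) := by
  rw [matSparsity, Set.ncard_eq_toFinset_card', Set.toFinset_ofPred, Finset.card_filter,
    Fintype.sum_prod_type, Finset.sum_comm]
  simp [colSupport, Finset.card_filter]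

def labelRestrict {ι : Type*} [DecidableEq ι] [Zero α] (c : m → n → ι) (M : Matrix m n α)
    (ℓ : ι) : Matrix m n α :=
  of fun i j => if c i j = ℓ then M i j else 0

lemma sum_labelRestrict {ι : Type*} [DecidableEq ι] [AddCommMonoid α] {c : m → n → ι}
    {M : Matrix m n α} {s : Finset ι} (hc : ∀ i j, M i j ≠ 0 → c i j ∈ s) :
    ∑ ℓ ∈ s, labelRestrict c M ℓ = M := by
  ext i j
  simp only [sum_apply, labelRestrict, of_apply, Finset.sum_ite_eq]
  by_cases h : M i j = 0 <;> simp [h, hc i j]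

end Matrix

open Matrix

section Spiky

variable {F : Type*} [Field F] {m n : Type*}

lemma isBlocky_of_iff_exists_rect {k : ℕ} (S : Fin k → Finset m) (T : Fin k → Finset n)
    (hS : ∀ a b, a ≠ b → Disjoint (S a) (S b)) (hT : ∀ a b, a ≠ b → Disjoint (T a) (T b))
    (P : m → n → Prop) [∀ i j, Decidable (P i j)] (hP : ∀ i j, (∃ l, i ∈ S l ∧ j ∈ T l) ↔ P i j) :
    IsBlocky (of fun i j => if P i j then (1 : F) else 0) :=
  ⟨k, S, T, hS, hT, fun i j h => by simp [(hP i j).mp h],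
    fun i j h => by simp [mt (hP i j).mpr h]⟩

lemma isSpiky_of_subsingleton_colSupport [Fintype m] [Fintype n] [DecidableEq F]
    (M : Matrix m n F) (hM : ∀ j, (M.colSupport j : Set m).Subsingleton) : IsSpiky M := by
  classical
  set e := Fintype.equivFin m
  have hB := isBlocky_of_iff_exists_rect (F := F) (fun l => {e.symm l})
    (fun l => ({j | M (e.symm l) j ≠ 0} : Finset n))
    (fun a b hab => by simpa using e.symm.injective.ne hab)
    (fun a b hab => Finset.disjoint_left.mpr fun j ha hb =>
      hab (e.symm.injective (hM j (by simpa using ha) (by simpa using hb))))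
    (fun i j => M i j ≠ 0)
    (fun i j => ⟨fun ⟨l, hi, hj⟩ => by simp_all, fun h => ⟨e i, by simpa using h⟩⟩)
  refine ⟨_, 1, fun j => ∑ i, M i j, hB, fun i j => ?_⟩
  by_cases h : M i j = 0
  · simp [h]
  · have hcol : ∑ i', M i' j = M i j := Finset.sum_eq_single i
      (fun i' _ hi' => by_contra fun h' => hi' (hM j (by simpa using h') (by simpa using h)))
      (by simp)
    simp [h, hcol]

lemma isSpiky_of_eq_zero_of_ne_col [Fintype m] (M : Matrix m n F) (j₀ : n)
    (hM : ∀ i j, j ≠ j₀ → M i j = 0) : IsSpiky M := by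
  classical
  have hB := isBlocky_of_iff_exists_rect (F := F) (fun _ : Fin 1 => (Finset.univ : Finset m))
    (fun _ => {j₀}) (fun a b hab => absurd (Subsingleton.elim a b) hab)
    (fun a b hab => absurd (Subsingleton.elim a b) hab) (fun _ j => j = j₀) (by simp)
  refine ⟨_, fun i => M i j₀, 1, hB, fun i j => ?_⟩
  by_cases h : j = j₀
  · simp [h]
  · simp [h, hM i j h]

lemma spikyRank_le_card {ι : Type*} {M : Matrix m n F} (s : Finset ι) (f : ι → Matrix m n F)
    (hf : ∀ ℓ ∈ s, IsSpiky (f ℓ)) (hM : ∑ ℓ ∈ s, f ℓ = M) : spikyRank M ≤ #s := by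
  refine Nat.sInf_le ⟨fun k => f (s.equivFin.symm k), fun k => hf _ (s.equivFin.symm k).2, ?_⟩
  rw [← hM, ← Finset.sum_coe_sort s f]
  exact Equiv.sum_comp s.equivFin.symm (fun ℓ : s => f ℓ)

lemma spikyRank_le_card_heavy_add [Fintype m] [Fintype n] [DecidableEq F]
    (M : Matrix m n F) (t : ℕ) : spikyRank M ≤ #{j | t < #(M.colSupport j)} + t := by
  classical
  choose r hr_inj hr_lt using fun j => (M.colSupport j).exists_injOn_lt_card
  set H : Finset n := {j | t < #(M.colSupport j)}
  let c : m → n → n ⊕ ℕ := fun i j => if j ∈ H then .inl j else .inr (r j i)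
  have hc : ∀ i j, M i j ≠ 0 → c i j ∈ H.disjSum (range t) := by
    intro i j hij
    by_cases hj : j ∈ H
    · simp [c, hj]
    · have hrank := hr_lt j i (by simpa using hij)
      have hlight : #(M.colSupport j) ≤ t := by simpa [H] using hj
      simpa [c, hj] using hrank.trans_le hlight
  calc spikyRank M ≤ #(H.disjSum (range t)) :=
        spikyRank_le_card _ (labelRestrict c M) ?_ (sum_labelRestrict hc)
    _ = #H + t := by simp [card_disjSum]
  rintro (j₀ | k) -
  · refine isSpiky_of_eq_zero_of_ne_col _ j₀ fun i j hj => ?_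
    by_cases hjH : j ∈ H <;> simp [labelRestrict, c, hjH, hj]
  · refine isSpiky_of_subsingleton_colSupport _ fun j i hi i' hi' => ?_
    by_cases hjH : j ∈ H
    · simp [labelRestrict, c, hjH] at hi
    · simp [labelRestrict, c, hjH] at hi hi'
      exact hr_inj j (by simpa using hi.2) (by simpa using hi'.2) (hi.1.trans hi'.1.symm)

lemma card_heavy_mul_le_matSparsity [Fintype m] [Fintype n] [DecidableEq F] (M : Matrix m n F)
    (t : ℕ) : #{j | t < #(M.colSupport j)} * (t + 1) ≤ matSparsity M := by
  rw [matSparsity_eq_sum_card_colSupport, ← smul_eq_mul, ← sum_const]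
  calc ∑ _ ∈ {j | t < #(M.colSupport j)}, (t + 1)
      ≤ ∑ j ∈ {j | t < #(M.colSupport j)}, #(M.colSupport j) :=
        sum_le_sum fun j hj => by simpa using hj
    _ ≤ ∑ j, #(M.colSupport j) := sum_le_sum_of_subset (subset_univ _)

end Spiky

/-- A matrix with at most m nonzero entries has spiky rank at most 2 * sqrt m. -/
theorem spikyRank_le_two_sqrt_sparsity {F : Type*} [Field F] {N : ℕ}
    (M : Matrix (Fin N) (Fin N) F) (m : ℕ) (hm : matSparsity M ≤ m) :
    (spikyRank M : ℝ) ≤ 2 * Real.sqrt m := by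
  classical
  have hheavy := (card_heavy_mul_le_matSparsity M (Nat.sqrt m)).trans hm
  calc (spikyRank M : ℝ) ≤ #{j | Nat.sqrt m < #(M.colSupport j)} + Nat.sqrt m := by
        exact_mod_cast spikyRank_le_card_heavy_add M (Nat.sqrt m)
    _ ≤ √m + √m := add_le_add (cast_le_sqrt_of_mul_sqrt_succ_le hheavy) Real.nat_sqrt_le_real_sqrt
    _ = 2 * √m := by ring
end

section
/- Let M be a matrix over a field F and let 0 < r ≤ spr(M). Then the rank-r rigidity of M satisfies R_M(r) ≥ (spr(M) − r)^2 / 4. -/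
/-!
Write `M = A + C` optimally, with `rank A ≤ r` and `s = |supp C| ≤ R_M(r)`. By subadditivity,
`spr M ≤ rank A + spr C ≤ r + 2√s`, whence `(spr M - r)² / 4 ≤ s`.

For `spr C ≤ 2√s` (with `√s` rounded down): at most `√s` rows of `C` have more than `√s`
nonzero entries, so these rows form a matrix of rank at most `√s`. The remaining rows have at
most `√s` nonzero entries each, so they split into `√s` matrices with at most one nonzero entry
per row, and such a matrix is spiky.
-/

open Matrix MeasureTheory

open Finset

section
variable {F : Type*} [Field F] {m n : Type*}

lemma spikyRank_le_of_sum_eq {k : ℕ} {M : Matrix m n F} (f : Fin k → Matrix m n F)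
    (hf : ∀ l, IsSpiky (f l)) (hsum : ∑ l, f l = M) : spikyRank M ≤ k :=
  Nat.sInf_le ⟨f, hf, hsum⟩

lemma IsSpiky.spikyRank_le_one {M : Matrix m n F} (hM : IsSpiky M) : spikyRank M ≤ 1 :=
  spikyRank_le_of_sum_eq (fun _ => M) (fun _ => hM) (by simp)

variable [Fintype m] [Fintype n]

lemma isBlocky_ones : IsBlocky (of fun _ _ => 1 : Matrix m n F) :=
  ⟨1, fun _ => univ, fun _ => univ, fun a b h => absurd (Subsingleton.elim a b) h,
    fun a b h => absurd (Subsingleton.elim a b) h, fun _ _ _ => rfl,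
    fun i j h => absurd ⟨0, mem_univ i, mem_univ j⟩ h⟩

lemma isSpiky_vecMulVec (u : m → F) (v : n → F) : IsSpiky (vecMulVec u v) :=
  ⟨of fun _ _ => 1, u, v, isBlocky_ones, fun i j => by simp [vecMulVec_apply]⟩

/-- The blocky factor is the support pattern, with blocks `{i | M i c ≠ 0} × {c}` for each
column `c`; the rank-one factor carries the row sums. -/
lemma isSpiky_of_support_row_subsingleton {M : Matrix m n F}
    (h : ∀ i, (Function.support (M i)).Subsingleton) : IsSpiky M := by
  classical
  let e := Fintype.equivFin n
  refine ⟨of fun i j => if M i j = 0 then 0 else 1, fun i => ∑ j, M i j, fun _ => 1,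
    ⟨Fintype.card n, fun l => {i | M i (e.symm l) ≠ 0}, fun l => {e.symm l}, ?_, ?_, ?_, ?_⟩, ?_⟩
  · intro a b hab
    rw [Finset.disjoint_left]
    intro i ha hb
    simp only [mem_filter, mem_univ, true_and] at ha hb
    exact hab (e.symm.injective (h i ha hb))
  · intro a b hab
    simpa using e.symm.injective.ne hab
  · rintro i j ⟨l, hi, hj⟩
    simp only [mem_filter, mem_univ, true_and, mem_singleton] at hi hj
    simp [hj, hi]
  · intro i j hij
    have : M i j = 0 := by
      by_contra hne
      exact hij ⟨e j, by simpa using hne, by simp⟩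
    simp [this]
  · intro i j
    by_cases hij : M i j = 0
    · simp [hij]
    · simp only [of_apply, hij, if_false, one_mul, mul_one]
      exact (Fintype.sum_eq_single j fun j' hj' => by_contra fun hne => hj' (h i hne hij)).symm

lemma exists_sum_vecMulVec_eq (A : Matrix m n F) :
    ∃ (u : Fin A.rank → m → F) (v : Fin A.rank → n → F), ∑ l, vecMulVec (u l) (v l) = A := by
  let b := Module.finBasisOfFinrankEq F _ A.rank_eq_finrank_span_cols.symm
  have hcol (j : n) : A.col j ∈ Submodule.span F (Set.range A.col) :=
    Submodule.subset_span ⟨j, rfl⟩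
  refine ⟨fun l => b l, fun l j => b.repr ⟨A.col j, hcol j⟩ l, ?_⟩
  ext i j
  have hcolj := congrArg (fun x : Submodule.span F (Set.range A.col) => (x : m → F) i)
    (b.sum_repr ⟨A.col j, hcol j⟩)
  simp only [Submodule.coe_sum, Submodule.coe_smul, Finset.sum_apply, Pi.smul_apply,
    smul_eq_mul] at hcolj
  simp only [Matrix.sum_apply, vecMulVec_apply]
  rw [← show A.col j i = A i j from rfl, ← hcolj]
  exact sum_congr rfl fun l _ => mul_comm _ _

lemma spikyRank_le_rank (A : Matrix m n F) : spikyRank A ≤ A.rank := by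
  obtain ⟨u, v, huv⟩ := exists_sum_vecMulVec_eq A
  exact spikyRank_le_of_sum_eq _ (fun l => isSpiky_vecMulVec (u l) (v l)) huv

lemma exists_sum_eq_of_spikyRank (M : Matrix m n F) :
    ∃ f : Fin (spikyRank M) → Matrix m n F, (∀ l, IsSpiky (f l)) ∧ ∑ l, f l = M := by
  obtain ⟨u, v, huv⟩ := exists_sum_vecMulVec_eq M
  exact Nat.sInf_mem (s := {r | ∃ f : Fin r → Matrix m n F, (∀ l, IsSpiky (f l)) ∧ ∑ l, f l = M})
    ⟨M.rank, _, fun l => isSpiky_vecMulVec (u l) (v l), huv⟩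

lemma spikyRank_add_le (A B : Matrix m n F) : spikyRank (A + B) ≤ spikyRank A + spikyRank B := by
  obtain ⟨f, hf, hfA⟩ := exists_sum_eq_of_spikyRank A
  obtain ⟨g, hg, hgB⟩ := exists_sum_eq_of_spikyRank B
  refine spikyRank_le_of_sum_eq (Fin.append f g) (fun l => ?_) ?_
  · refine Fin.addCases (fun l => ?_) (fun l => ?_) l
    · rw [Fin.append_left]; exact hf l
    · rw [Fin.append_right]; exact hg l
  · simp only [Fin.sum_univ_add, Fin.append_left, Fin.append_right, hfA, hgB]

section RowCounts
variable [DecidableEq F]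

lemma exists_support_subsingleton_card_sub_le {w : n → F} {k : ℕ}
    (hw : #{j | w j ≠ 0} ≤ k + 1) :
    ∃ p : n → F, (Function.support p).Subsingleton ∧ #{j | (w - p) j ≠ 0} ≤ k := by
  classical
  by_cases hzero : ∀ j, w j = 0
  · exact ⟨0, by simp, by simp [hzero]⟩
  obtain ⟨j₀, hj₀⟩ := not_forall.mp hzero
  let p : n → F := Pi.single j₀ (w j₀)
  refine ⟨p, ?_, ?_⟩
  · exact (Set.subsingleton_singleton (a := j₀)).anti Pi.support_single_subset
  · have hmem : j₀ ∈ ({j | w j ≠ 0} : Finset n) := by simpa using hj₀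
    have hsub : ({j | (w - p) j ≠ 0} : Finset n) ⊆
        ({j | w j ≠ 0} : Finset n).erase j₀ := by
      intro j hj
      by_cases hjj : j = j₀
      · subst hjj; simp [p] at hj
      · simpa [p, Pi.single_apply, hjj] using hj
    have := card_le_card hsub
    rw [card_erase_of_mem hmem] at this
    omega

lemma spikyRank_le_of_card_row_le (k : ℕ) {M : Matrix m n F}
    (hM : ∀ i, #{j | M i j ≠ 0} ≤ k) : spikyRank M ≤ k := by
  induction k generalizing M with
  | zero =>
    have hM0 : M = 0 := by
      ext i j
      simpa using filter_eq_empty_iff.mp (card_eq_zero.mp (Nat.le_zero.mp (hM i))) (mem_univ j)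
    exact spikyRank_le_of_sum_eq ![] (fun l => l.elim0) (by simp [hM0])
  | succ k ih =>
    choose p hp hcard using fun i => exists_support_subsingleton_card_sub_le (hM i)
    calc spikyRank M = spikyRank ((M - of p) + of p) := by rw [sub_add_cancel]
      _ ≤ spikyRank (M - of p) + spikyRank (of p) := spikyRank_add_le _ _
      _ ≤ k + 1 := add_le_add (ih hcard) (isSpiky_of_support_row_subsingleton hp).spikyRank_le_one

lemma matSparsity_eq_sum_card_row (M : Matrix m n F) :
    matSparsity M = ∑ i, #{j | M i j ≠ 0} := by
  rw [matSparsity, Set.ncard_eq_toFinset_card', Set.toFinset_ofPred, card_filter,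
    Fintype.sum_prod_type]
  simp only [card_filter]

lemma card_heavy_rows_mul_le (M : Matrix m n F) (t : ℕ) :
    #{i | t < #{j | M i j ≠ 0}} * (t + 1) ≤ matSparsity M := by
  rw [matSparsity_eq_sum_card_row, ← smul_eq_mul]
  exact (card_nsmul_le_sum _ _ _ fun i hi => (mem_filter.mp hi).2).trans
    (sum_le_sum_of_subset (subset_univ _))

end RowCounts

lemma spikyRank_le_two_mul_sqrt_matSparsity (C : Matrix m n F) :
    spikyRank C ≤ 2 * Nat.sqrt (matSparsity C) := by
  classical
  set t := Nat.sqrt (matSparsity C)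
  set H : Finset m := {i | t < #{j | C i j ≠ 0}}
  have hH : #H ≤ t := by
    have h1 := card_heavy_rows_mul_le C t
    have h2 := Nat.lt_succ_sqrt (matSparsity C)
    exact Nat.lt_succ_iff.mp (Nat.lt_of_mul_lt_mul_right (h1.trans_lt h2))
  set CH : Matrix m n F := of fun i j => if i ∈ H then C i j else 0
  have hCH : spikyRank CH ≤ t := by
    refine (spikyRank_le_rank CH).trans ((rank_le_card_of_support_subset CH H ?_).trans hH)
    intro i hi
    by_contra hiH
    exact hi (funext fun j => if_neg hiH)
  have hCL : spikyRank (C - CH) ≤ t := by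
    refine spikyRank_le_of_card_row_le t fun i => ?_
    by_cases hi : i ∈ H
    · simp [CH, hi]
    · have hrow (j : n) : (C - CH) i j = C i j := by simp [CH, hi]
      simp only [hrow]
      simpa [H] using hi
  calc spikyRank C = spikyRank (CH + (C - CH)) := by rw [add_sub_cancel]
    _ ≤ spikyRank CH + spikyRank (C - CH) := spikyRank_add_le _ _
    _ ≤ 2 * t := by omega

end

lemma exists_add_rank_le_matSparsity_le_rigidity {F : Type*} [Field F] {N : ℕ}
    (M : Matrix (Fin N) (Fin N) F) (r : ℕ) :
    ∃ A C : Matrix (Fin N) (Fin N) F, M = A + C ∧ A.rank ≤ r ∧ matSparsity C ≤ rigidity M r :=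
  Nat.sInf_mem (s := {s | ∃ A C : Matrix (Fin N) (Fin N) F,
      M = A + C ∧ A.rank ≤ r ∧ matSparsity C ≤ s})
    ⟨matSparsity M, 0, M, (zero_add M).symm, by simp, le_rfl⟩

theorem rigidity_ge_of_spikyRank_general {F : Type*} [Field F] {N : ℕ}
    (M : Matrix (Fin N) (Fin N) F) (r : ℕ) (hrs : r ≤ spikyRank M) :
    ((spikyRank M : ℝ) - r) ^ 2 / 4 ≤ (rigidity M r : ℝ) := by
  obtain ⟨A, C, rfl, hA, hC⟩ := exists_add_rank_le_matSparsity_le_rigidity M r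
  set t := Nat.sqrt (matSparsity C)
  have hspr : spikyRank (A + C) ≤ r + 2 * t :=
    (spikyRank_add_le A C).trans
      (add_le_add ((spikyRank_le_rank A).trans hA) (spikyRank_le_two_mul_sqrt_matSparsity C))
  have hsq : t * t ≤ rigidity (A + C) r := (Nat.sqrt_le _).trans hC
  have hspr' : (spikyRank (A + C) : ℝ) ≤ r + 2 * t := by exact_mod_cast hspr
  have hrs' : (r : ℝ) ≤ spikyRank (A + C) := by exact_mod_cast hrs
  have hsq' : (t : ℝ) * t ≤ rigidity (A + C) r := by exact_mod_cast hsq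
  nlinarith

/-- Large spiky rank implies high rigidity. -/
theorem rigidity_ge_of_spikyRank {F : Type*} [Field F] {N : ℕ}
    (M : Matrix (Fin N) (Fin N) F) (r : ℕ) (hr : 0 < r) (hrs : r ≤ spikyRank M) :
    ((spikyRank M : ℝ) - r) ^ 2 / 4 ≤ (rigidity M r : ℝ) :=
  rigidity_ge_of_spikyRank_general M r hrs
end

section
/- For every Boolean matrix M in {0,1}^{n×n}, the blocky rank of M (over the reals) is at most 2^{bc(M)}, where bc(M) is the blocky cover number of M. -/
open Matrix MeasureTheory

/-!
If blocky matrices `B₁, …, B_k` cover a Boolean matrix `M`, then entrywise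
`M = 1 - ∏ₗ (1 - Bₗ)`. Expanding the product writes `M` as a signed sum of the entrywise
products `∏_{l ∈ t} Bₗ` over the nonempty `t ⊆ {1, …, k}`, and each such product is blocky,
because intersecting two families of disjoint rectangles again gives disjoint rectangles.
-/

open Finset Function

section Blocky
variable {F : Type*} [Field F] {m n : Type*}

lemma isBlocky_of_rectangles {ι : Type*} [Fintype ι] {M : Matrix m n F}
    (S : ι → Finset m) (T : ι → Finset n)
    (hS : Pairwise (Disjoint on S)) (hT : Pairwise (Disjoint on T))
    (h1 : ∀ i j, (∃ l, i ∈ S l ∧ j ∈ T l) → M i j = 1)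
    (h0 : ∀ i j, (¬ ∃ l, i ∈ S l ∧ j ∈ T l) → M i j = 0) : IsBlocky M := by
  let e := (Fintype.equivFin ι).symm
  refine ⟨_, S ∘ e, T ∘ e, fun a b hab => hS (e.injective.ne hab),
    fun a b hab => hT (e.injective.ne hab), fun i j ⟨l, hl⟩ => h1 i j ⟨e l, hl⟩,
    fun i j h => h0 i j fun ⟨l, hl⟩ => h ⟨e.symm l, by simpa using hl⟩⟩

lemma IsBlocky.eq_zero_or_eq_one {M : Matrix m n F} (hM : IsBlocky M) (i : m) (j : n) :
    M i j = 0 ∨ M i j = 1 := by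
  obtain ⟨k, S, T, -, -, h1, h0⟩ := hM
  by_cases h : ∃ l, i ∈ S l ∧ j ∈ T l
  · exact .inr (h1 i j h)
  · exact .inl (h0 i j h)

lemma isBlocky_rectangle [DecidableEq m] [DecidableEq n] (S : Finset m) (T : Finset n) :
    IsBlocky (of fun i j => if i ∈ S ∧ j ∈ T then (1 : F) else 0) :=
  isBlocky_of_rectangles (fun _ : Unit => S) (fun _ => T) Subsingleton.pairwise
    Subsingleton.pairwise (fun _ _ ⟨_, h⟩ => if_pos h) fun _ _ h => if_neg fun h' => h ⟨(), h'⟩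

lemma pairwise_disjoint_inter {α ι κ : Type*} [DecidableEq α] {S : ι → Finset α}
    {S' : κ → Finset α} (h : Pairwise (Disjoint on S)) (h' : Pairwise (Disjoint on S')) :
    Pairwise (Disjoint on fun p : ι × κ => S p.1 ∩ S' p.2) := by
  rintro ⟨a, b⟩ ⟨c, d⟩ hne
  by_cases hac : a = c
  · subst hac
    have hbd : b ≠ d := by rintro rfl; exact hne rfl
    exact (h' hbd).mono inter_subset_right inter_subset_right
  · exact (h hac).mono inter_subset_left inter_subset_left

lemma IsBlocky.hadamard {A B : Matrix m n F} (hA : IsBlocky A) (hB : IsBlocky B) :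
    IsBlocky (A ⊙ B) := by
  classical
  obtain ⟨k, S, T, hS, hT, hA1, hA0⟩ := hA
  obtain ⟨k', S', T', hS', hT', hB1, hB0⟩ := hB
  refine isBlocky_of_rectangles (fun p : Fin k × Fin k' => S p.1 ∩ S' p.2)
    (fun p => T p.1 ∩ T' p.2) (pairwise_disjoint_inter (fun a b => hS a b) fun a b => hS' a b)
    (pairwise_disjoint_inter (fun a b => hT a b) fun a b => hT' a b) ?_ ?_
  · rintro i j ⟨⟨a, b⟩, hi, hj⟩
    rw [mem_inter] at hi hj
    rw [hadamard_apply, hA1 i j ⟨a, hi.1, hj.1⟩, hB1 i j ⟨b, hi.2, hj.2⟩, one_mul]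
  · intro i j h
    rw [hadamard_apply]
    by_cases hA : ∃ a, i ∈ S a ∧ j ∈ T a
    · obtain ⟨a, hia, hja⟩ := hA
      have hB : ¬ ∃ b, i ∈ S' b ∧ j ∈ T' b := fun ⟨b, hib, hjb⟩ =>
        h ⟨(a, b), mem_inter.2 ⟨hia, hib⟩, mem_inter.2 ⟨hja, hjb⟩⟩
      rw [hB0 i j hB, mul_zero]
    · rw [hA0 i j hA, zero_mul]

lemma isBlocky_prod [Fintype m] [Fintype n] {ι : Type*} {f : ι → Matrix m n F}
    (hf : ∀ l, IsBlocky (f l)) (s : Finset ι) :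
    IsBlocky (of fun i j => ∏ l ∈ s, f l i j) := by
  classical
  induction s using Finset.induction_on with
  | empty => simpa using isBlocky_rectangle (F := F) (univ : Finset m) (univ : Finset n)
  | insert a s ha ih =>
    simp only [prod_insert ha]
    exact (hf a).hadamard ih

lemma exists_isBlocky_cover [Fintype n] (M : Matrix m n F) :
    ∃ f : m → Matrix m n F, (∀ i, IsBlocky (f i)) ∧ ∀ i j, M i j = 1 ↔ ∃ i', f i' i j = 1 := by
  classical
  refine ⟨_, fun i₀ => isBlocky_rectangle {i₀} {j | M i₀ j = 1}, fun i j => ?_⟩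
  simp

lemma blockyRank_le_card_of_sum {ι : Type*} (s : Finset ι) {M : Matrix m n F}
    {f : ι → Matrix m n F} {c : ι → F} (hf : ∀ i ∈ s, IsBlocky (f i))
    (h : ∑ i ∈ s, c i • f i = M) : blockyRank M ≤ #s := by
  refine Nat.sInf_le ⟨fun k => f (s.equivFin.symm k), fun k => c (s.equivFin.symm k),
    fun k => hf _ (s.equivFin.symm k).2, ?_⟩
  rw [← h, ← sum_coe_sort s]
  exact Fintype.sum_equiv s.equivFin.symm _ _ fun _ => rfl

end Blocky

lemma one_sub_prod_one_sub_eq_sum {R ι : Type*} [CommRing R] [DecidableEq ι] (s : Finset ι)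
    (x : ι → R) :
    1 - ∏ i ∈ s, (1 - x i) = ∑ t ∈ s.powerset.erase ∅, -(-1) ^ #t * ∏ i ∈ t, x i := by
  have h : ∏ i ∈ s, (1 - x i) = ∑ t ∈ s.powerset, (-1) ^ #t * ∏ i ∈ t, x i := by
    simp [sub_eq_add_neg, prod_one_add, prod_neg]
  rw [h, ← add_sum_erase _ _ (empty_mem_powerset s)]
  simp [sum_neg_distrib]

lemma eq_one_sub_prod_one_sub {R ι : Type*} [CommRing R] [Fintype ι] {y : R} {x : ι → R}
    (hy : y = 0 ∨ y = 1) (hx : ∀ l, x l = 0 ∨ x l = 1) (h : y = 1 ↔ ∃ l, x l = 1) :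
    y = 1 - ∏ l, (1 - x l) := by
  rcases hy with rfl | rfl
  · have hx0 : ∀ l, x l = 0 := fun l =>
      (hx l).elim id fun h1 => by rw [h1]; exact (h.2 ⟨l, h1⟩).symm
    simp [hx0]
  · obtain ⟨l, hl⟩ := h.1 rfl
    rw [prod_eq_zero (mem_univ l) (by rw [hl, sub_self]), sub_zero]

theorem blockyRank_le_two_pow_card_of_cover {F m n ι : Type*} [Field F] [Fintype m] [Fintype n]
    [Fintype ι] {M : Matrix m n F} {f : ι → Matrix m n F} (hf : ∀ l, IsBlocky (f l))
    (hM : ∀ i j, M i j = 0 ∨ M i j = 1) (hcov : ∀ i j, M i j = 1 ↔ ∃ l, f l i j = 1) :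
    blockyRank M ≤ 2 ^ Fintype.card ι := by
  classical
  have hsum : ∑ t ∈ univ.powerset.erase ∅, (-(-1) ^ #t : F) • of (fun i j => ∏ l ∈ t, f l i j)
      = M := by
    ext i j
    simp only [Matrix.sum_apply, Matrix.smul_apply, of_apply, smul_eq_mul]
    rw [← one_sub_prod_one_sub_eq_sum, ← eq_one_sub_prod_one_sub (hM i j)
      (fun l => (hf l).eq_zero_or_eq_one i j) (hcov i j)]
  calc blockyRank M ≤ #(univ.powerset.erase ∅) :=
        blockyRank_le_card_of_sum _ (fun t _ => isBlocky_prod hf t) hsum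
    _ ≤ #(univ : Finset ι).powerset := card_erase_le
    _ = 2 ^ Fintype.card ι := by rw [card_powerset, card_univ]

lemma blockyCover_spec {m n : Type*} [Finite m] [Fintype n] (M : Matrix m n ℝ) :
    ∃ f : Fin (blockyCover M) → Matrix m n ℝ, (∀ l, IsBlocky (f l)) ∧
      ∀ i j, M i j = 1 ↔ ∃ l, f l i j = 1 := by
  obtain ⟨f, hf, hcov⟩ := exists_isBlocky_cover M
  let e := Finite.equivFin m
  exact Nat.sInf_mem (s := {k | ∃ f : Fin k → Matrix m n ℝ, (∀ l, IsBlocky (f l)) ∧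
    ∀ i j, M i j = 1 ↔ ∃ l, f l i j = 1})
    ⟨Nat.card m, f ∘ e.symm, fun l => hf _, fun i j => (hcov i j).trans e.exists_congr_left⟩

/-- For a Boolean matrix, blocky rank is at most 2 ^ (blocky cover number). -/
theorem blockyRank_le_two_pow_blockyCover {n : ℕ}
    (M : Matrix (Fin n) (Fin n) ℝ) (hBool : ∀ i j, M i j = 0 ∨ M i j = 1) :
    blockyRank M ≤ 2 ^ blockyCover M := by
  obtain ⟨f, hf, hcov⟩ := blockyCover_spec M
  simpa using blockyRank_le_two_pow_card_of_cover hf hBool hcov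
end

section
/- Every Boolean matrix M of rank at most r over the reals has at most 2^r distinct rows, and hence blocky rank at most 2^r. -/
open Matrix MeasureTheory

lemma exists_cols_determine {m n : ℕ} (M : Matrix (Fin m) (Fin n) ℝ)
    (r : ℕ) (hr : M.rank ≤ r) :
    ∃ S : Finset (Fin n), S.card ≤ r ∧
      ∀ i i' : Fin m, (∀ k ∈ S, M i k = M i' k) → M i = M i' := by
  classical
  obtain ⟨b, hbsub, hbspan, hbind⟩ :=
    exists_linearIndependent ℝ (Set.range Mᵀ)
  have hbfin : b.Finite := hbind.setFinite
  haveI : Fintype b := hbfin.fintype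
  have h1 : Module.finrank ℝ (Submodule.span ℝ b) = b.toFinset.card :=
    finrank_span_set_eq_card hbind
  have h2 : M.rank = Module.finrank ℝ (Submodule.span ℝ (Set.range Mᵀ)) :=
    Matrix.rank_eq_finrank_span_cols M
  have hcard : b.toFinset.card ≤ r := by
    rw [← h1, hbspan, ← h2]; exact hr
  have hpick : ∀ v ∈ b, ∃ j : Fin n, Mᵀ j = v := fun v hv => hbsub hv
  choose pick hpick' using hpick
  set S : Finset (Fin n) := b.toFinset.attach.image
    (fun v => pick v.1 (Set.mem_toFinset.mp v.2)) with hS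
  refine ⟨S, ?_, ?_⟩
  · calc S.card ≤ b.toFinset.attach.card := Finset.card_image_le
      _ = b.toFinset.card := Finset.card_attach
      _ ≤ r := hcard
  · intro i i' hagree
    set ψ : (Fin m → ℝ) →ₗ[ℝ] ℝ := (LinearMap.proj (R := ℝ) (φ := fun _ : Fin m => ℝ) i) - (LinearMap.proj (R := ℝ) (φ := fun _ : Fin m => ℝ) i') with hψdef
    have hψval : ∀ u : Fin m → ℝ, ψ u = u i - u i' := fun u => rfl
    have hker : b ⊆ (LinearMap.ker ψ : Set (Fin m → ℝ)) := by
      intro v hv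
      have hvS : pick v hv ∈ S := by
        rw [hS]
        exact Finset.mem_image.mpr ⟨⟨v, Set.mem_toFinset.mpr hv⟩,
          Finset.mem_attach _ _, rfl⟩
      have heq := hagree _ hvS
      have hvcol : Mᵀ (pick v hv) = v := hpick' v hv
      have : ψ v = 0 := by
        rw [hψval, ← hvcol]
        simpa [Matrix.transpose_apply] using sub_eq_zero_of_eq heq
      exact LinearMap.mem_ker.mpr this
    have hspan : Submodule.span ℝ b ≤ LinearMap.ker ψ := Submodule.span_le.mpr hker
    funext j
    have hmem : Mᵀ j ∈ Submodule.span ℝ b := by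
      rw [hbspan]; exact Submodule.subset_span ⟨j, rfl⟩
    have h0 : ψ (Mᵀ j) = 0 := LinearMap.mem_ker.mp (hspan hmem)
    rw [hψval] at h0
    simpa [Matrix.transpose_apply, sub_eq_zero] using h0

/-- A Boolean matrix of real rank at most r has at most 2^r distinct rows,
hence blocky rank at most 2^r. -/
theorem boolean_lowRank_rows_and_blockyRank {m n : ℕ}
    (M : Matrix (Fin m) (Fin n) ℝ) (hBool : ∀ i j, M i j = 0 ∨ M i j = 1)
    (r : ℕ) (hr : M.rank ≤ r) :
    (Finset.univ.image fun i => M i).card ≤ 2 ^ r ∧ blockyRank M ≤ 2 ^ r := by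
  classical
  obtain ⟨S, hScard, hSdet⟩ := exists_cols_determine M r hr
  set D : Finset (Fin n → ℝ) := Finset.univ.image fun i => M i with hD
  -- Part 1: counting
  have hDcard : D.card ≤ 2 ^ r := by
    have hinj : Set.InjOn (fun v : Fin n → ℝ => fun k : ↥S => decide (v k.1 = 1))
        ↑D := by
      intro v hv w hw hvw
      obtain ⟨i, _, rfl⟩ := Finset.mem_image.mp hv
      obtain ⟨i', _, rfl⟩ := Finset.mem_image.mp hw
      refine hSdet i i' fun k hk => ?_
      have := congrFun hvw ⟨k, hk⟩
      simp only [decide_eq_decide] at this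
      rcases hBool i k with h1 | h1 <;> rcases hBool i' k with h2 | h2 <;>
        simp_all
    calc D.card ≤ (Finset.univ : Finset (↥S → Bool)).card :=
          Finset.card_le_card_of_injOn _ (fun _ _ => Finset.mem_univ _) hinj
      _ = 2 ^ S.card := by
          simp [Finset.card_univ, Fintype.card_fun]
      _ ≤ 2 ^ r := Nat.pow_le_pow_right (by norm_num) hScard
  refine ⟨hDcard, ?_⟩
  -- Part 2: blocky rank
  set B : (Fin n → ℝ) → Matrix (Fin m) (Fin n) ℝ :=
    fun v i j => if M i = v ∧ v j = 1 then 1 else 0 with hB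
  have hblocky : ∀ v, IsBlocky (B v) := by
    intro v
    refine ⟨1, fun _ => Finset.univ.filter (fun i => M i = v),
      fun _ => Finset.univ.filter (fun j => v j = 1), ?_, ?_, ?_, ?_⟩
    · intro a b hab; exact absurd (Subsingleton.elim a b) hab
    · intro a b hab; exact absurd (Subsingleton.elim a b) hab
    · rintro i j ⟨l, hi, hj⟩
      simp only [Finset.mem_filter] at hi hj
      simp [hB, hi.2, hj.2]
    · intro i j h
      rw [hB]
      simp only [not_exists] at h
      have := h 0
      simp only [Finset.mem_filter, Finset.mem_univ, true_and] at this
      simp only [ite_eq_right_iff]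
      intro hc; exact absurd hc (by tauto)
  have hsum : ∑ v ∈ D, B v = M := by
    funext i j
    rw [Matrix.sum_apply]
    have hrw : ∀ v, B v i j = if M i = v then (if v j = 1 then (1:ℝ) else 0) else 0 := by
      intro v; rw [hB]; by_cases h1 : M i = v <;> by_cases h2 : v j = 1 <;> simp [h1, h2]
    simp_rw [hrw]
    rw [Finset.sum_ite_eq D (M i)]
    have hmem : M i ∈ D := Finset.mem_image.mpr ⟨i, Finset.mem_univ i, rfl⟩
    rcases hBool i j with h | h <;> simp [hmem, h]
  have hmemInf : D.card ∈ {k | ∃ (f : Fin k → Matrix (Fin m) (Fin n) ℝ)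
      (c : Fin k → ℝ), (∀ i, IsBlocky (f i)) ∧ ∑ i, c i • f i = M} := by
    refine ⟨fun x => B (D.equivFin.symm x).1, fun _ => 1, fun x => hblocky _, ?_⟩
    simp only [one_smul]
    rw [← hsum, ← Finset.sum_attach D (fun v => B v)]
    exact Fintype.sum_equiv D.equivFin.symm _ _ (fun x => rfl)
  calc blockyRank M ≤ D.card := Nat.sInf_le hmemInf
    _ ≤ 2 ^ r := hDcard
end

section
/- Let B be a blocky N × N matrix and I_N the N × N identity matrix, such that B and I_N have disjoint supports (no entry is nonzero in both). Then there exists a subset V of [N] with |V| ≥ N/4 such that the submatrix of B restricted to V × V is the zero matrix. -/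
open Matrix MeasureTheory

/-- If a blocky matrix has zero diagonal then it has an all-zero principal submatrix
on at least a quarter of the indices. -/
theorem blocky_zero_diag_submatrix {F : Type*} [Field F] {N : ℕ}
    (B : Matrix (Fin N) (Fin N) F) (hB : IsBlocky B) (hdiag : ∀ i, B i i = 0) :
    ∃ V : Finset (Fin N), (N : ℝ) / 4 ≤ V.card ∧ ∀ i ∈ V, ∀ j ∈ V, B i j = 0 := by
  classical
  obtain ⟨k, S, T, hS, hT, hone, hzero⟩ := hB
  -- survival set for a choice of deletions
  set V : (Fin k → Bool) → Finset (Fin N) :=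
    fun ε => Finset.univ.filter
      (fun i => ∀ ℓ, (ε ℓ = true → i ∉ S ℓ) ∧ (ε ℓ = false → i ∉ T ℓ)) with hV
  -- no index is in both S ℓ and T ℓ
  have hST : ∀ i ℓ, i ∈ S ℓ → i ∉ T ℓ := by
    intro i ℓ h1 h2
    have := hone i i ⟨ℓ, h1, h2⟩
    rw [hdiag i] at this
    exact zero_ne_one this
  have uniqS : ∀ (i : Fin N) ℓ ℓ', i ∈ S ℓ → i ∈ S ℓ' → ℓ = ℓ' := by
    intro i ℓ ℓ' h h'
    by_contra hne
    exact Finset.disjoint_left.mp (hS ℓ ℓ' hne) h h'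
  have uniqT : ∀ (i : Fin N) ℓ ℓ', i ∈ T ℓ → i ∈ T ℓ' → ℓ = ℓ' := by
    intro i ℓ ℓ' h h'
    by_contra hne
    exact Finset.disjoint_left.mp (hT ℓ ℓ' hne) h h'
  -- per-index counting: each index survives for at least a quarter of all choices
  have key : ∀ i : Fin N,
      2 ^ k ≤ 4 * (Finset.univ.filter (fun ε : Fin k → Bool => i ∈ V ε)).card := by
    intro i
    set fix : (Fin k → Bool) → (Fin k → Bool) :=
      fun ε ℓ => if i ∈ S ℓ then false else if i ∈ T ℓ then true else ε ℓ with hfix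
    have hsurv : ∀ ε, i ∈ V (fix ε) := by
      intro ε
      simp only [hV, Finset.mem_filter, Finset.mem_univ, true_and]
      intro ℓ
      constructor
      · intro ht hiS
        simp only [hfix, hiS, if_true] at ht
        exact Bool.false_ne_true ht
      · intro hf hiT
        have hiS : i ∉ S ℓ := fun h => hST i ℓ h hiT
        simp only [hfix, hiS, if_false, hiT, if_true] at hf
        exact absurd hf (by decide)
    -- injective encoding of ε from (fix ε, extra two bits)
    have hinj : Set.InjOn
        (fun ε : Fin k → Bool =>
          (fix ε, (decide (∃ ℓ, i ∈ S ℓ ∧ ε ℓ = true),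
                   decide (∃ ℓ, i ∈ T ℓ ∧ ε ℓ = true))))
        (Finset.univ : Finset (Fin k → Bool)) := by
      have hdecS : ∀ (ε : Fin k → Bool) ℓ, i ∈ S ℓ →
          decide (∃ ℓ', i ∈ S ℓ' ∧ ε ℓ' = true) = ε ℓ := by
        intro ε ℓ hℓ
        cases hε : ε ℓ with
        | true => simp only [decide_eq_true_iff]; exact ⟨ℓ, hℓ, hε⟩
        | false =>
          simp only [decide_eq_false_iff_not]
          rintro ⟨ℓ', hℓ', hε'⟩
          rw [uniqS i ℓ' ℓ hℓ' hℓ] at hε'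
          rw [hε] at hε'
          exact Bool.false_ne_true hε'
      have hdecT : ∀ (ε : Fin k → Bool) ℓ, i ∈ T ℓ →
          decide (∃ ℓ', i ∈ T ℓ' ∧ ε ℓ' = true) = ε ℓ := by
        intro ε ℓ hℓ
        cases hε : ε ℓ with
        | true => simp only [decide_eq_true_iff]; exact ⟨ℓ, hℓ, hε⟩
        | false =>
          simp only [decide_eq_false_iff_not]
          rintro ⟨ℓ', hℓ', hε'⟩
          rw [uniqT i ℓ' ℓ hℓ' hℓ] at hε'
          rw [hε] at hε'
          exact Bool.false_ne_true hε'
      intro ε _ δ _ h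
      simp only [Prod.mk.injEq] at h
      obtain ⟨h1, h2, h3⟩ := h
      funext ℓ
      by_cases hiS : i ∈ S ℓ
      · rw [← hdecS ε ℓ hiS, ← hdecS δ ℓ hiS, h2]
      · by_cases hiT : i ∈ T ℓ
        · rw [← hdecT ε ℓ hiT, ← hdecT δ ℓ hiT, h3]
        · have := congrFun h1 ℓ
          simpa only [hfix, hiS, hiT, if_false] using this
    have hmaps : ∀ ε ∈ (Finset.univ : Finset (Fin k → Bool)),
        (fix ε, (decide (∃ ℓ, i ∈ S ℓ ∧ ε ℓ = true),
                 decide (∃ ℓ, i ∈ T ℓ ∧ ε ℓ = true))) ∈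
          (Finset.univ.filter (fun ε : Fin k → Bool => i ∈ V ε)) ×ˢ
            (Finset.univ : Finset (Bool × Bool)) := by
      intro ε _
      simp only [Finset.mem_product, Finset.mem_filter, Finset.mem_univ, true_and, and_true]
      exact hsurv ε
    have hcard := Finset.card_le_card_of_injOn _ hmaps hinj
    rw [Finset.card_product] at hcard
    have h1 : (Finset.univ : Finset (Fin k → Bool)).card = 2 ^ k := by
      simp [Finset.card_univ]
    have h2 : (Finset.univ : Finset (Bool × Bool)).card = 4 := by
      simp [Finset.card_univ]
    rw [h1, h2] at hcard
    omega
  -- double counting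
  have hsum : ∀ ε : Fin k → Bool, (V ε).card =
      ∑ i : Fin N, (if i ∈ V ε then 1 else 0) := by
    intro ε
    rw [Finset.card_eq_sum_ones]
    rw [Finset.sum_ite_mem]
    simp [Finset.univ_inter]
  have hdouble : (N : ℕ) * 2 ^ k ≤ 4 * ∑ ε : Fin k → Bool, (V ε).card := by
    calc (N : ℕ) * 2 ^ k = ∑ _i : Fin N, 2 ^ k := by
              simp [Finset.sum_const, Finset.card_univ]
      _ ≤ ∑ i : Fin N, 4 * (Finset.univ.filter (fun ε : Fin k → Bool => i ∈ V ε)).card :=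
              Finset.sum_le_sum (fun i _ => key i)
      _ = 4 * ∑ i : Fin N, (Finset.univ.filter (fun ε : Fin k → Bool => i ∈ V ε)).card := by
              rw [Finset.mul_sum]
      _ = 4 * ∑ ε : Fin k → Bool, (V ε).card := by
              congr 1
              have : ∀ i : Fin N,
                  (Finset.univ.filter (fun ε : Fin k → Bool => i ∈ V ε)).card
                  = ∑ ε : Fin k → Bool, (if i ∈ V ε then 1 else 0) :=
                fun i => Finset.card_filter _ _
              simp_rw [this, hsum]
              rw [Finset.sum_comm]
  -- find a good choice
  have hex : ∃ ε : Fin k → Bool, N ≤ 4 * (V ε).card := by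
    by_contra hcon
    push_neg at hcon
    have : ∑ ε : Fin k → Bool, 4 * (V ε).card < ∑ _ε : Fin k → Bool, N := by
      apply Finset.sum_lt_sum_of_nonempty
      · exact Finset.univ_nonempty
      · intro ε _; exact hcon ε
    rw [Finset.sum_const, Finset.card_univ] at this
    simp only [Fintype.card_fun, Fintype.card_bool, Fintype.card_fin, smul_eq_mul] at this
    rw [← Finset.mul_sum, mul_comm (2 ^ k) N] at this
    exact absurd (lt_of_le_of_lt hdouble this) (lt_irrefl _)
  obtain ⟨ε, hε⟩ := hex
  refine ⟨V ε, ?_, ?_⟩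
  · rw [div_le_iff₀ (by norm_num : (0:ℝ) < 4)]
    have : (N : ℝ) ≤ 4 * (V ε).card := by exact_mod_cast hε
    linarith
  · intro i hi j hj
    apply hzero
    rintro ⟨ℓ, hiS, hjT⟩
    simp only [hV, Finset.mem_filter, Finset.mem_univ, true_and] at hi hj
    cases hεℓ : ε ℓ with
    | true => exact (hi ℓ).1 hεℓ hiS
    | false => exact (hj ℓ).2 hεℓ hjT
end

section
/- Let M : {0,1}^n × {0,1}^n → ℝ be computed by a Σ∘ReLU circuit of size s, i.e., M = Σ_{i=1}^s L_i where each L_i is a ReLU gate. Then s ≥ spr(M) / (3(n+1)). -/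
open Matrix MeasureTheory

/-!
Encode the row parts `a x` and the negated column parts `-b y` of a gate's argument by their
ranks among the at most `2 ^ (n + 1)` values they take; the gate `max 0 (a x + b y)` is then
nonzero exactly where the column code is below the row code. Splitting by the most significant
bit in which the two codes differ writes this comparison matrix as a sum of `n + 1` blocky
matrices, and multiplying each of them entrywise by the rank-one matrices `a x * 1` and
`1 * b y` writes the gate as a sum of `2 (n + 1)` spiky matrices.
-/

open Finset

namespace Nat

def IsTopDiffBit (t q p : ℕ) : Prop :=
  q.testBit t = false ∧ p.testBit t = true ∧ ∀ j, t < j → q.testBit j = p.testBit j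

theorem div_two_pow_eq_iff_testBit_eq {k q p : ℕ} :
    p / 2 ^ k = q / 2 ^ k ↔ ∀ j, k ≤ j → p.testBit j = q.testBit j := by
  constructor
  · intro h j hj
    simpa only [testBit_div_two_pow, Nat.sub_add_cancel hj] using
      congrArg (testBit · (j - k)) h
  · intro h
    exact eq_of_testBit_eq fun i => by
      simp only [testBit_div_two_pow]
      exact h _ (Nat.le_add_left k i)

namespace IsTopDiffBit

variable {t t' q p : ℕ}

theorem lt (h : IsTopDiffBit t q p) : q < p :=
  lt_of_testBit t h.1 h.2.1 h.2.2

theorem unique (h : IsTopDiffBit t q p) (h' : IsTopDiffBit t' q p) : t = t' := by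
  rcases lt_trichotomy t t' with hlt | heq | hgt
  · simpa [h'.1, h'.2.1] using h.2.2 t' hlt
  · exact heq
  · simpa [h.1, h.2.1] using h'.2.2 t hgt

theorem lt_of_lt_two_pow {m : ℕ} (h : IsTopDiffBit t q p) (hp : p < 2 ^ m) : t < m :=
  (Nat.pow_lt_pow_iff_right (by norm_num)).1 ((ge_two_pow_of_testBit h.2.1).trans_lt hp)

end IsTopDiffBit

theorem isTopDiffBit_iff {t q p : ℕ} :
    IsTopDiffBit t q p ↔
      p / 2 ^ (t + 1) = q / 2 ^ (t + 1) ∧ p.testBit t = true ∧ q.testBit t = false := by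
  rw [div_two_pow_eq_iff_testBit_eq]
  exact ⟨fun ⟨hq, hp, h⟩ => ⟨fun j hj => (h j hj).symm, hp, hq⟩,
    fun ⟨h, hp, hq⟩ => ⟨hq, hp, fun j hj => (h j hj).symm⟩⟩

theorem exists_isTopDiffBit_of_lt {q p : ℕ} (h : q < p) : ∃ t, IsTopDiffBit t q p := by
  obtain ⟨t, ht, habove⟩ := exists_most_significant_bit (xor_ne_zero_iff.2 h.ne)
  have hagree : ∀ j, t < j → q.testBit j = p.testBit j := fun j hj => by
    simpa [testBit_xor] using habove j hj
  rw [testBit_xor] at ht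
  cases hq : q.testBit t <;> cases hp : p.testBit t <;> simp [hq, hp] at ht
  · exact ⟨t, hq, hp, hagree⟩
  · exact absurd h (lt_of_testBit t hp hq fun j hj => (hagree j hj).symm).not_gt

end Nat

section

variable {F : Type*} [Field F] {X Y : Type*} [Fintype X] [Fintype Y]

theorem isBlocky_ite_eq_and {ι : Type*} [DecidableEq ι] (f : X → ι) (g : Y → ι)
    (P : X → Prop) (Q : Y → Prop) [DecidablePred P] [DecidablePred Q] :
    IsBlocky (Matrix.of fun x y => if f x = g y ∧ P x ∧ Q y then (1 : F) else 0) := by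
  classical
  set e := ((univ.image f).equivFin).symm
  set S : Fin _ → Finset X := fun l => univ.filter fun x => P x ∧ f x = e l
  set T : Fin _ → Finset Y := fun l => univ.filter fun y => Q y ∧ g y = e l
  have hblock : ∀ x y, (∃ l, x ∈ S l ∧ y ∈ T l) ↔ f x = g y ∧ P x ∧ Q y := by
    intro x y
    simp only [S, T, mem_filter, mem_univ, true_and]
    constructor
    · rintro ⟨l, ⟨hP, hf⟩, hQ, hg⟩
      exact ⟨hf.trans hg.symm, hP, hQ⟩
    · rintro ⟨hfg, hP, hQ⟩
      refine ⟨e.symm ⟨f x, mem_image_of_mem f (mem_univ x)⟩, ⟨hP, ?_⟩, hQ, ?_⟩ <;> simp [hfg]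
  refine ⟨_, S, T, fun a b hab => ?_, fun a b hab => ?_, fun x y hxy => ?_, fun x y hxy => ?_⟩
  · exact disjoint_filter.2 fun x _ ha hb => hab (e.injective (Subtype.ext (ha.2.symm.trans hb.2)))
  · exact disjoint_filter.2 fun y _ ha hb => hab (e.injective (Subtype.ext (ha.2.symm.trans hb.2)))
  · simp [(hblock x y).1 hxy]
  · simp [(hblock x y).not.1 hxy]

theorem exists_isBlocky_sum_eq_ite_lt (r : X → ℕ) (c : Y → ℕ) {m : ℕ}
    (hr : ∀ x, r x < 2 ^ m) :
    ∃ B : Fin m → Matrix X Y F, (∀ t, IsBlocky (B t)) ∧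
      ∑ t, B t = Matrix.of fun x y => if c y < r x then 1 else 0 := by
  classical
  refine ⟨fun t => Matrix.of fun x y => if Nat.IsTopDiffBit t (c y) (r x) then 1 else 0,
    fun t => ?_, ?_⟩
  · simpa only [Nat.isTopDiffBit_iff] using isBlocky_ite_eq_and (F := F)
      (fun x => r x / 2 ^ ((t : ℕ) + 1)) (fun y => c y / 2 ^ ((t : ℕ) + 1))
      (fun x => (r x).testBit t = true) (fun y => (c y).testBit t = false)
  · ext x y
    simp only [Matrix.sum_apply, Matrix.of_apply]
    split_ifs with hlt
    · obtain ⟨t, ht⟩ := Nat.exists_isTopDiffBit_of_lt hlt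
      rw [sum_eq_single ⟨t, ht.lt_of_lt_two_pow (hr x)⟩
        (fun t' _ hne => if_neg fun ht' => hne (Fin.ext (ht'.unique ht)))
        (fun h => absurd (mem_univ _) h), if_pos ht]
    · exact sum_eq_zero fun t _ => if_neg fun ht => hlt ht.lt

theorem exists_nat_encoding_lt_iff {α : Type*} [LinearOrder α] (a : X → α) (b : Y → α) :
    ∃ (r : X → ℕ) (c : Y → ℕ), (∀ x, r x < Fintype.card X + Fintype.card Y) ∧
      ∀ x y, b y < a x ↔ c y < r x := by
  classical
  set V := univ.image a ∪ univ.image b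
  set e := (V.orderIsoOfFin rfl).symm
  have haV : ∀ x, a x ∈ V := fun x => mem_union_left _ (mem_image_of_mem a (mem_univ x))
  have hbV : ∀ y, b y ∈ V := fun y => mem_union_right _ (mem_image_of_mem b (mem_univ y))
  refine ⟨fun x => e ⟨a x, haV x⟩, fun y => e ⟨b y, hbV y⟩, fun x => ?_, fun x y => ?_⟩
  · calc (e ⟨a x, haV x⟩ : ℕ) < V.card := Fin.is_lt _
      _ ≤ (univ.image a).card + (univ.image b).card := card_union_le _ _
      _ ≤ Fintype.card X + Fintype.card Y := add_le_add card_image_le card_image_le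
  · rw [Fin.val_fin_lt, e.lt_iff_lt, Subtype.mk_lt_mk]

theorem exists_isSpiky_sum_eq_relu (a : X → ℝ) (b : Y → ℝ) {m : ℕ}
    (hm : Fintype.card X + Fintype.card Y ≤ 2 ^ m) :
    ∃ f : Fin m × Bool → Matrix X Y ℝ, (∀ i, IsSpiky (f i)) ∧
      ∑ i, f i = Matrix.of fun x y => max 0 (a x + b y) := by
  obtain ⟨r, c, hr, hrc⟩ := exists_nat_encoding_lt_iff a (fun y => -b y)
  obtain ⟨B, hB, hBsum⟩ :=
    exists_isBlocky_sum_eq_ite_lt (F := ℝ) r c fun x => (hr x).trans_le hm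
  refine ⟨fun p : Fin m × Bool => Matrix.of fun x y =>
      B p.1 x y * ((if p.2 then a x else 1) * (if p.2 then 1 else b y)),
    fun p => ⟨B p.1, _, _, hB p.1, fun _ _ => rfl⟩, ?_⟩
  ext x y
  calc _ = (∑ t, B t x y) * (a x + b y) := by
        simp only [Matrix.sum_apply, Matrix.of_apply, Fintype.sum_prod_type, Fintype.sum_bool,
          sum_mul]
        exact sum_congr rfl fun t _ => by simp only [if_true, Bool.false_eq_true, if_false]; ring
    _ = (if -b y < a x then 1 else 0) * (a x + b y) := by
        rw [← Matrix.sum_apply, hBsum, Matrix.of_apply]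
        simp only [hrc]
    _ = max 0 (a x + b y) := by
        split_ifs with h
        · rw [one_mul, max_eq_right (by linarith)]
        · rw [zero_mul, max_eq_left (by linarith)]

end

section

variable {F : Type*} [Field F] {m n : Type*}

theorem spikyRank_sum_le_card {ι : Type*} [Fintype ι] (f : ι → Matrix m n F)
    (hf : ∀ i, IsSpiky (f i)) : spikyRank (∑ i, f i) ≤ Fintype.card ι :=
  Nat.sInf_le ⟨f ∘ (Fintype.equivFin ι).symm, fun _ => hf _, Equiv.sum_comp _ f⟩

theorem spikyRank_sum_le_card_mul_card {κ ι : Type*} [Fintype κ] [Fintype ι]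
    (A : κ → Matrix m n F)
    (hA : ∀ k, ∃ f : ι → Matrix m n F, (∀ i, IsSpiky (f i)) ∧ ∑ i, f i = A k) :
    spikyRank (∑ k, A k) ≤ Fintype.card κ * Fintype.card ι := by
  choose f hf hsum using hA
  have := spikyRank_sum_le_card (fun p : κ × ι => f p.1 p.2) fun p => hf p.1 p.2
  simpa only [Fintype.sum_prod_type, hsum, Fintype.card_prod] using this

end

/-- A Σ∘ReLU circuit of size s computing M must satisfy s ≥ spr(M)/(3(n+1)). -/
theorem sigma_relu_size_lower_bound (n s : ℕ)
    (w₁ w₂ : Fin s → Fin n → ℝ) (α : Fin s → ℝ)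
    (M : Matrix (Fin n → Bool) (Fin n → Bool) ℝ)
    (hM : ∀ x y, M x y = ∑ i, max 0
      (∑ j, w₁ i j * (if x j then (1 : ℝ) else 0) +
       ∑ j, w₂ i j * (if y j then (1 : ℝ) else 0) + α i)) :
    (spikyRank M : ℝ) / (3 * (n + 1)) ≤ s := by
  set gate : Fin s → Matrix (Fin n → Bool) (Fin n → Bool) ℝ := fun i => Matrix.of fun x y =>
    max 0 ((∑ j, w₁ i j * (if x j then (1 : ℝ) else 0)) +
      (∑ j, w₂ i j * (if y j then (1 : ℝ) else 0) + α i))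
  have hgate : ∀ i, ∃ f : Fin (n + 1) × Bool → Matrix (Fin n → Bool) (Fin n → Bool) ℝ,
      (∀ p, IsSpiky (f p)) ∧ ∑ p, f p = gate i := fun i =>
    exists_isSpiky_sum_eq_relu _ _ (by simp [pow_succ, mul_two])
  have hMgate : M = ∑ i, gate i := by
    ext x y
    simp only [hM, gate, Matrix.sum_apply, Matrix.of_apply, add_assoc]
  have hrank : (spikyRank M : ℝ) ≤ s * ((n + 1) * 2) := by
    exact_mod_cast (by simpa [hMgate] using spikyRank_sum_le_card_mul_card gate hgate)
  rw [div_le_iff₀ (by positivity)]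
  nlinarith [(s.cast_nonneg : (0 : ℝ) ≤ s)]
end

section
/- If G = (V,E) is a subgraph of the n-dimensional Hamming cube, then |V| ≥ 2^{|E|/|V|}. -/
open Matrix MeasureTheory

/-!
Split `V` along a coordinate `i` on which it is not constant, into halves of sizes `a, b < |V|`.
Edges inside a half are bounded by induction, and the edges in direction `i` form a matching
between the halves, so there are at most `min a b` of them. Hence
`2 ^ |E| ≤ a ^ a * b ^ b * 2 ^ min a b ≤ (a + b) ^ (a + b)`, i.e. `|E| ≤ |V| log₂ |V|`.
-/

theorem pow_self_mul_pow_self_mul_two_pow_min_le (a b : ℕ) :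
    a ^ a * b ^ b * 2 ^ min a b ≤ (a + b) ^ (a + b) := by
  wlog hab : a ≤ b generalizing a b
  · simpa only [mul_comm (b ^ b), min_comm, add_comm] using this b a (by omega)
  calc a ^ a * b ^ b * 2 ^ min a b = (2 * a) ^ a * b ^ b := by
        rw [min_eq_left hab, mul_pow]; ring
    _ ≤ (a + b) ^ a * (a + b) ^ b := by gcongr <;> omega
    _ = (a + b) ^ (a + b) := (pow_add _ _ _).symm

section HammingEdgeSet

open Finset

variable {ι β : Type*} [Fintype ι] [DecidableEq β]

def IsHammingEdgeSet (V : Finset (ι → β)) (E : Finset (Sym2 (ι → β))) : Prop :=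
  ∀ e ∈ E, ∃ x y, e = s(x, y) ∧ x ∈ V ∧ y ∈ V ∧ hammingDist x y = 1

theorem eq_update_of_hammingDist_eq_one [DecidableEq ι] {x y : ι → β} (h : hammingDist x y = 1)
    {i : ι} (hi : x i ≠ y i) : y = Function.update x i (y i) := by
  funext j
  rcases eq_or_ne j i with rfl | hj
  · simp
  · rw [Function.update_of_ne hj]
    by_contra hne
    exact hj (card_le_one.1 h.le j (by simpa using Ne.symm hne) i (by simpa using hi))

theorem mk_eq_mk_update_not_of_hammingDist_eq_one [DecidableEq ι] {x y z : ι → Bool}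
    (h : hammingDist x y = 1) {i : ι} (hi : x i ≠ y i) (hz : z ∈ s(x, y)) :
    s(x, y) = s(z, Function.update z i (!z i)) := by
  rcases Sym2.mem_iff.1 hz with rfl | rfl
  · rw [← Bool.eq_not.2 hi.symm, ← eq_update_of_hammingDist_eq_one h hi]
  · rw [Sym2.eq_swap, ← Bool.eq_not.2 hi,
      ← eq_update_of_hammingDist_eq_one (hammingDist_comm x z ▸ h) hi.symm]

namespace IsHammingEdgeSet

variable {V : Finset (ι → β)} {E : Finset (Sym2 (ι → β))}

theorem inter_sym2 (hE : IsHammingEdgeSet V E) (W : Finset (ι → β)) :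
    IsHammingEdgeSet W (E ∩ W.sym2) := by
  intro e he
  obtain ⟨heE, heW⟩ := mem_inter.1 he
  obtain ⟨x, y, rfl, -, -, hxy⟩ := hE e heE
  rw [mem_sym2_iff] at heW
  exact ⟨x, y, rfl, heW x (Sym2.mem_mk_left x y), heW y (Sym2.mem_mk_right x y), hxy⟩

theorem eq_empty_of_subsingleton (hE : IsHammingEdgeSet V E)
    (hV : (V : Set (ι → β)).Subsingleton) : E = ∅ := by
  refine eq_empty_of_forall_notMem fun e he => ?_
  obtain ⟨x, y, -, hx, hy, hxy⟩ := hE e he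
  rw [hV hx hy, hammingDist_self] at hxy
  exact zero_ne_one hxy

theorem subset_union_filter_not_isDiag {V : Finset (ι → Bool)} {E : Finset (Sym2 (ι → Bool))}
    (hE : IsHammingEdgeSet V E) (i : ι) :
    E ⊆ E ∩ (V.filter (· i = false)).sym2 ∪ E ∩ (V.filter (· i = true)).sym2 ∪
      E.filter fun e => ¬ (e.map (· i)).IsDiag := by
  intro e he
  obtain ⟨x, y, rfl, hx, hy, -⟩ := hE e he
  simp only [mem_union, mem_inter, mem_filter, mk_mem_sym2_iff, Sym2.map_mk, Sym2.mk_isDiag_iff]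
  grind

-- An edge in direction `i` is determined by either endpoint, so these edges inject into each half.
theorem card_filter_not_isDiag_le [DecidableEq ι] {V : Finset (ι → Bool)}
    {E : Finset (Sym2 (ι → Bool))} (hE : IsHammingEdgeSet V E) (i : ι) (b : Bool) :
    #(E.filter fun e => ¬ (e.map (· i)).IsDiag) ≤ #(V.filter (· i = b)) := by
  refine (card_le_card fun e he => ?_).trans
    (card_image_le (f := fun v => s(v, Function.update v i (!v i))))
  obtain ⟨heE, hcross⟩ := mem_filter.1 he
  obtain ⟨x, y, rfl, hx, hy, hxy⟩ := hE e heE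
  rw [Sym2.map_mk, Sym2.mk_isDiag_iff] at hcross
  obtain ⟨z, hz, hzb⟩ : ∃ z ∈ s(x, y), z i = b := by
    by_cases hxb : x i = b
    · exact ⟨x, Sym2.mem_mk_left x y, hxb⟩
    · exact ⟨y, Sym2.mem_mk_right x y, by cases b <;> simp_all⟩
  have hzV : z ∈ V := by rcases Sym2.mem_iff.1 hz with rfl | rfl <;> assumption
  exact mem_image.2 ⟨z, mem_filter.2 ⟨hzV, hzb⟩,
    (mk_eq_mk_update_not_of_hammingDist_eq_one hxy hcross hz).symm⟩

theorem two_pow_card_le_card_pow_card [DecidableEq ι] {V : Finset (ι → Bool)}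
    {E : Finset (Sym2 (ι → Bool))} (hE : IsHammingEdgeSet V E) : 2 ^ #E ≤ #V ^ #V := by
  induction V using Finset.strongInduction generalizing E with
  | H V ih =>
  by_cases hV : (V : Set (ι → Bool)).Subsingleton
  · rw [hE.eq_empty_of_subsingleton hV, card_empty, pow_zero]
    exact Nat.pow_self_pos
  obtain ⟨x, hx, y, hy, hxy⟩ := Set.not_subsingleton_iff.1 hV
  obtain ⟨i, hi⟩ := Function.ne_iff.1 hxy
  set V₀ := V.filter (· i = false)
  set V₁ := V.filter (· i = true)
  have hhalf : ∀ b, V.filter (· i = b) ⊂ V := fun b => filter_ssubset.2 <| by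
    by_cases hxb : x i = b
    · exact ⟨y, hy, hxb ▸ hi.symm⟩
    · exact ⟨x, hx, hxb⟩
  have hcardV : #V = #V₀ + #V₁ := by
    rw [card_eq_sum_card_fiberwise fun v _ => mem_univ (v i), Fintype.sum_bool, add_comm]
  have hcardE : #E ≤ #(E ∩ V₀.sym2) + #(E ∩ V₁.sym2) +
      #(E.filter fun e => ¬ (e.map (· i)).IsDiag) :=
    (card_le_card (hE.subset_union_filter_not_isDiag i)).trans <|
      (card_union_le _ _).trans (add_le_add_left (card_union_le _ _) _)
  have hcross : #(E.filter fun e => ¬ (e.map (· i)).IsDiag) ≤ min #V₀ #V₁ :=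
    le_min (hE.card_filter_not_isDiag_le i false) (hE.card_filter_not_isDiag_le i true)
  calc 2 ^ #E ≤ 2 ^ #(E ∩ V₀.sym2) * 2 ^ #(E ∩ V₁.sym2) * 2 ^ min #V₀ #V₁ := by
        rw [← pow_add, ← pow_add]
        exact Nat.pow_le_pow_right two_pos (hcardE.trans (by omega))
    _ ≤ #V₀ ^ #V₀ * #V₁ ^ #V₁ * 2 ^ min #V₀ #V₁ :=
        Nat.mul_le_mul_right _ <| Nat.mul_le_mul
          (ih V₀ (hhalf false) (hE.inter_sym2 V₀)) (ih V₁ (hhalf true) (hE.inter_sym2 V₁))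
    _ ≤ (#V₀ + #V₁) ^ (#V₀ + #V₁) := pow_self_mul_pow_self_mul_two_pow_min_le _ _
    _ = #V ^ #V := by rw [hcardV]

end IsHammingEdgeSet

end HammingEdgeSet

/-- Edge-isoperimetry in the Hamming cube: a subgraph with vertex set V and edge set E
satisfies |V| ≥ 2^(|E|/|V|). -/
theorem hamming_cube_subgraph_bound (n : ℕ)
    (V : Finset (Fin n → Bool)) (E : Finset (Sym2 (Fin n → Bool)))
    (hV : V.Nonempty)
    (hE : ∀ e ∈ E, ∃ x y, e = s(x, y) ∧ x ∈ V ∧ y ∈ V ∧ hammingDist x y = 1) :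
    (2 : ℝ) ^ ((E.card : ℝ) / V.card) ≤ (V.card : ℝ) := by
  have hVpos : (0 : ℝ) < V.card := by exact_mod_cast hV.card_pos
  have hpow : ((2 : ℝ) ^ ((E.card : ℝ) / V.card)) ^ V.card = 2 ^ E.card := by
    rw [← Real.rpow_natCast, ← Real.rpow_mul zero_le_two, div_mul_cancel₀ _ hVpos.ne',
      Real.rpow_natCast]
  refine (pow_le_pow_iff_left₀ (by positivity) hVpos.le hV.card_pos.ne').1 ?_
  rw [hpow]
  exact_mod_cast IsHammingEdgeSet.two_pow_card_le_card_pow_card hE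
end

section
/- Let M be a real matrix and p a univariate real polynomial with p(0) = 0 (or more generally any polynomial, accounting for the constant term via the all-ones matrix). Define p(M) entrywise by p(M)[x,y] = p(M[x,y]). Then br(p(M)) ≤ br(M)^{deg(p)} · deg(p), where br denotes blocky rank over the reals. -/
/-!
Entrywise products of blocky matrices are blocky (intersect the row blocks and the column
blocks pairwise), so expanding `A = ∑ cᵢ Bᵢ` and `B = ∑ dⱼ Cⱼ` shows that blocky rank is
submultiplicative under the Hadamard product; in particular `br(M^{∘k}) ≤ br(M)^k`. A polynomial
without constant term acts entrywise as `p(M) = ∑_{k=1}^{d} c_k M^{∘k}`, and subadditivity of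
blocky rank bounds this by `d · br(M)^d`.
-/

open Matrix MeasureTheory

open Function

theorem Pairwise.disjoint_inter_prod {α ι κ : Type*} [DecidableEq α] {S : ι → Finset α}
    {S' : κ → Finset α} (hS : Pairwise (Disjoint on S)) (hS' : Pairwise (Disjoint on S')) :
    Pairwise (Disjoint on fun l : ι × κ => S l.1 ∩ S' l.2) := by
  rintro ⟨a, b⟩ ⟨a', b'⟩ h
  by_cases ha : a = a'
  · exact (hS' fun hb => h (Prod.ext ha hb)).mono Finset.inter_subset_right
      Finset.inter_subset_right
  · exact (hS ha).mono Finset.inter_subset_left Finset.inter_subset_left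

namespace IsBlocky

variable {F : Type*} [Field F] {m n : Type*}

theorem of_fintype {ι : Type*} [Fintype ι] {M : Matrix m n F} (S : ι → Finset m)
    (T : ι → Finset n) (hS : Pairwise (Disjoint on S)) (hT : Pairwise (Disjoint on T))
    (h1 : ∀ i j, (∃ l, i ∈ S l ∧ j ∈ T l) → M i j = 1)
    (h0 : ∀ i j, (¬ ∃ l, i ∈ S l ∧ j ∈ T l) → M i j = 0) : IsBlocky M := by
  set e := Fintype.equivFin ι
  refine ⟨Fintype.card ι, S ∘ e.symm, T ∘ e.symm, fun a b h => hS (e.symm.injective.ne h),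
    fun a b h => hT (e.symm.injective.ne h), fun i j ⟨l, hi, hj⟩ => h1 i j ⟨_, hi, hj⟩,
    fun i j h => h0 i j fun ⟨l, hi, hj⟩ => h ⟨e l, ?_, ?_⟩⟩ <;> simpa

theorem single [DecidableEq m] [DecidableEq n] (i : m) (j : n) :
    IsBlocky (Matrix.single i j (1 : F)) := by
  refine of_fintype (ι := Unit) (fun _ => {i}) (fun _ => {j}) Subsingleton.pairwise
    Subsingleton.pairwise ?_ ?_
  · rintro i' j' ⟨-, hi, hj⟩
    rw [Finset.mem_singleton.mp hi, Finset.mem_singleton.mp hj, single_apply_same]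
  · intro i' j' h
    exact single_apply_of_ne _ _ _ _ _ fun ⟨hi, hj⟩ => h ⟨(), by simp [hi], by simp [hj]⟩

theorem hadamard_s19 {A B : Matrix m n F} (hA : IsBlocky A) (hB : IsBlocky B) :
    IsBlocky (A ⊙ B) := by
  classical
  obtain ⟨k, S, T, hS, hT, h1, h0⟩ := hA
  obtain ⟨k', S', T', hS', hT', h1', h0'⟩ := hB
  refine of_fintype (fun l : Fin k × Fin k' => S l.1 ∩ S' l.2) (fun l => T l.1 ∩ T' l.2)
    (Pairwise.disjoint_inter_prod (fun _ _ => hS _ _) (fun _ _ => hS' _ _))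
    (Pairwise.disjoint_inter_prod (fun _ _ => hT _ _) (fun _ _ => hT' _ _)) ?_ ?_
  · rintro i j ⟨l, hi, hj⟩
    rw [Finset.mem_inter] at hi hj
    rw [hadamard_apply, h1 i j ⟨_, hi.1, hj.1⟩, h1' i j ⟨_, hi.2, hj.2⟩, one_mul]
  · intro i j h
    rw [hadamard_apply, mul_eq_zero]
    by_contra! hAB
    obtain ⟨l, hil, hjl⟩ : ∃ l, i ∈ S l ∧ j ∈ T l := by_contra fun h' => hAB.1 (h0 i j h')
    obtain ⟨l', hil', hjl'⟩ : ∃ l, i ∈ S' l ∧ j ∈ T' l := by_contra fun h' => hAB.2 (h0' i j h')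
    exact h ⟨(l, l'), Finset.mem_inter.mpr ⟨hil, hil'⟩, Finset.mem_inter.mpr ⟨hjl, hjl'⟩⟩

end IsBlocky

section BlockyRank

variable {F : Type*} [Field F] {m n : Type*}

theorem exists_fin_blocky_decomposition_of_fintype {ι : Type*} [Fintype ι] {M : Matrix m n F}
    (f : ι → Matrix m n F) (c : ι → F) (hf : ∀ i, IsBlocky (f i)) (h : ∑ i, c i • f i = M) :
    ∃ (f' : Fin (Fintype.card ι) → Matrix m n F) (c' : Fin (Fintype.card ι) → F),
      (∀ i, IsBlocky (f' i)) ∧ ∑ i, c' i • f' i = M := by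
  set e := Fintype.equivFin ι
  refine ⟨f ∘ e.symm, c ∘ e.symm, fun i => hf _, ?_⟩
  rw [← h]
  exact e.symm.sum_comp fun i => c i • f i

theorem blockyRank_le_card {ι : Type*} [Fintype ι] {M : Matrix m n F}
    (f : ι → Matrix m n F) (c : ι → F) (hf : ∀ i, IsBlocky (f i)) (h : ∑ i, c i • f i = M) :
    blockyRank M ≤ Fintype.card ι :=
  Nat.sInf_le (exists_fin_blocky_decomposition_of_fintype f c hf h)

@[simp]
theorem blockyRank_zero : blockyRank (0 : Matrix m n F) = 0 :=
  Nat.le_zero.mp <| blockyRank_le_card (ι := Empty) Empty.elim Empty.elim Empty.rec (by simp)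

variable [Fintype m] [Fintype n]

theorem exists_blocky_decomposition (M : Matrix m n F) :
    ∃ (f : Fin (blockyRank M) → Matrix m n F) (c : Fin (blockyRank M) → F),
      (∀ i, IsBlocky (f i)) ∧ ∑ i, c i • f i = M := by
  classical
  have h : ∑ p : m × n, M p.1 p.2 • Matrix.single p.1 p.2 (1 : F) = M := by
    conv_rhs => rw [matrix_eq_sum_single M]
    simp [Fintype.sum_prod_type]
  exact Nat.sInf_mem (s := {r | ∃ (f : Fin r → Matrix m n F) (c : Fin r → F),
      (∀ i, IsBlocky (f i)) ∧ ∑ i, c i • f i = M})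
    ⟨_, exists_fin_blocky_decomposition_of_fintype _ _ (fun p : m × n => .single p.1 p.2) h⟩

theorem blockyRank_add_le (A B : Matrix m n F) :
    blockyRank (A + B) ≤ blockyRank A + blockyRank B := by
  obtain ⟨f, c, hf, hA⟩ := exists_blocky_decomposition A
  obtain ⟨g, d, hg, hB⟩ := exists_blocky_decomposition B
  refine (blockyRank_le_card (Sum.elim f g) (Sum.elim c d) (Sum.forall.mpr ⟨hf, hg⟩)
    ?_).trans_eq (by simp)
  simp [Fintype.sum_sum_type, hA, hB]

theorem blockyRank_smul_le (a : F) (A : Matrix m n F) : blockyRank (a • A) ≤ blockyRank A := by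
  obtain ⟨f, c, hf, hA⟩ := exists_blocky_decomposition A
  refine (blockyRank_le_card f (fun i => a * c i) hf ?_).trans_eq (by simp)
  simp [← hA, Finset.smul_sum, smul_smul]

theorem blockyRank_sum_le {ι : Type*} (s : Finset ι) (A : ι → Matrix m n F) :
    blockyRank (∑ i ∈ s, A i) ≤ ∑ i ∈ s, blockyRank (A i) := by
  classical
  induction s using Finset.induction with
  | empty => simp
  | insert i s hi ih =>
    rw [Finset.sum_insert hi, Finset.sum_insert hi]
    exact (blockyRank_add_le _ _).trans (Nat.add_le_add_left ih _)

theorem blockyRank_hadamard_le (A B : Matrix m n F) :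
    blockyRank (A ⊙ B) ≤ blockyRank A * blockyRank B := by
  obtain ⟨f, c, hf, hA⟩ := exists_blocky_decomposition A
  obtain ⟨g, d, hg, hB⟩ := exists_blocky_decomposition B
  refine (blockyRank_le_card (fun p : Fin _ × Fin _ => f p.1 ⊙ g p.2) (fun p => c p.1 * d p.2)
    (fun p => (hf p.1).hadamard_s19 (hg p.2)) ?_).trans_eq (by simp)
  ext i j
  conv_rhs => rw [← hA, ← hB]
  simp [Matrix.sum_apply, Fintype.sum_prod_type, Finset.sum_mul_sum, mul_mul_mul_comm]

theorem blockyRank_map_pow_succ_le (M : Matrix m n F) (k : ℕ) :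
    blockyRank (M.map (· ^ (k + 1))) ≤ blockyRank M ^ (k + 1) := by
  induction k with
  | zero => simp
  | succ k ih =>
    have h : M.map (· ^ (k + 2)) = M ⊙ M.map (· ^ (k + 1)) := by
      ext i j; simp [pow_succ']
    calc blockyRank (M.map (· ^ (k + 2)))
        ≤ blockyRank M * blockyRank (M.map (· ^ (k + 1))) := h ▸ blockyRank_hadamard_le _ _
      _ ≤ blockyRank M * blockyRank M ^ (k + 1) := Nat.mul_le_mul_left _ ih
      _ = blockyRank M ^ (k + 2) := (pow_succ' _ _).symm

end BlockyRank

theorem blockyRank_map_eval_le {F : Type*} [Field F] {m n : Type*} [Fintype m] [Fintype n]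
    (M : Matrix m n F) {p : Polynomial F} (hp : p.coeff 0 = 0) :
    blockyRank (M.map p.eval) ≤ blockyRank M ^ p.natDegree * p.natDegree := by
  set d := p.natDegree
  have hexpand : M.map p.eval = ∑ k ∈ Finset.range d, p.coeff (k + 1) • M.map (· ^ (k + 1)) := by
    ext i j
    simp [Matrix.sum_apply, Polynomial.eval_eq_sum_range, Finset.sum_range_succ', hp, d]
  have hpow : ∀ k < d, blockyRank M ^ (k + 1) ≤ blockyRank M ^ d := by
    intro k hk
    rcases (blockyRank M).eq_zero_or_pos with h | h
    · simp [h]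
    · exact Nat.pow_le_pow_right h hk
  calc blockyRank (M.map p.eval)
      ≤ ∑ k ∈ Finset.range d, blockyRank (p.coeff (k + 1) • M.map (· ^ (k + 1))) :=
        hexpand ▸ blockyRank_sum_le _ _
    _ ≤ ∑ _k ∈ Finset.range d, blockyRank M ^ d := Finset.sum_le_sum fun k hk =>
        (blockyRank_smul_le _ _).trans <|
          (blockyRank_map_pow_succ_le M k).trans (hpow k (Finset.mem_range.mp hk))
    _ = blockyRank M ^ d * d := by simp [mul_comm]

/-- Blocky rank of an entrywise polynomial image: br(p(M)) ≤ br(M)^(deg p) * deg p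
for polynomials with zero constant term. -/
theorem blockyRank_polynomial_apply {a b : ℕ} (M : Matrix (Fin a) (Fin b) ℝ)
    (p : Polynomial ℝ) (hp : p.coeff 0 = 0) :
    blockyRank (Matrix.of fun i j => p.eval (M i j)) ≤
      blockyRank M ^ p.natDegree * p.natDegree :=
  blockyRank_map_eval_le M hp
end
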